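/- Let n ≥ 2, let A be a linear subspace of ℝ^n of dimension d ∈ [1, n−1], and let j ∈ [1, min(d, n−d)]. If A is (n−d, j)-irrational, then for every e ∈ [j, n−j] the subspace A is (e, j)-irrational. -/

import Mathlib

noncomputable section

/-- A subspace of `ℝ^n` is rational if it is spanned by vectors with rational coordinates. -/
def IsRationalSubspace {n : ℕ} (B : Submodule ℝ (EuclideanSpace ℝ (Fin n))) : Prop :=
  ∃ s : Set (EuclideanSpace ℝ (Fin n)),
    (∀ v ∈ s, ∀ i, ∃ q : ℚ, v i = (q : ℝ)) ∧ Submodule.span ℝ s = B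

/-- `A` is `(e, j)`-irrational: every rational subspace `B` of dimension `e` satisfies
`dim (A ∩ B) < j + max 0 (dim A + e - n)` (here `dim A + e - n` is truncated
subtraction, which equals `max 0 (dim A + e - n)`). -/
def IsIrrational {n : ℕ} (A : Submodule ℝ (EuclideanSpace ℝ (Fin n))) (e j : ℕ) : Prop :=
  ∀ B : Submodule ℝ (EuclideanSpace ℝ (Fin n)),
    IsRationalSubspace B → Module.finrank ℝ B = e →
      Module.finrank ℝ ↥(A ⊓ B) < j + (Module.finrank ℝ A + e - n)

/-!
A rational subspace `B` of dimension `e` can be enlarged (if `e ≤ n - dim A`) or shrunk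
(if `e ≥ n - dim A`) to a rational subspace `C` of dimension `n - dim A`: extract a rational basis
of `B` and complete it by standard basis vectors, or drop some of its vectors. Enlarging `B` to `C` can only enlarge `A ∩ B`; shrinking it
loses at most `dim B - dim C` dimensions of `A ∩ B`, which is exactly the change of the
threshold `j + max 0 (dim A + e - n)`.
-/

open Submodule Module

section SpanBetween

variable {K V : Type*} [DivisionRing K] [AddCommGroup V] [Module K V] [FiniteDimensional K V]

theorem exists_subset_span_between {R s t : Set V} (hs : s ⊆ R) (ht : t ⊆ R)
    (hst : span K s ≤ span K t) {m : ℕ} (hsm : finrank K (span K s) ≤ m)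
    (hmt : m ≤ finrank K (span K t)) :
    ∃ u ⊆ R, span K s ≤ span K u ∧ span K u ≤ span K t ∧ finrank K (span K u) = m := by
  obtain ⟨b₀, hb₀s, hb₀span, hb₀⟩ := exists_linearIndependent K s
  obtain ⟨b, hbR, hb₀b, htb, hb⟩ :=
    exists_linearIndepOn_id_extension hb₀ (Set.subset_union_left (t := t))
  have hbspan : span K b = span K t := by
    refine le_antisymm (span_le.2 (hbR.trans (Set.union_subset ?_ subset_span)))
      (span_le.2 (Set.subset_union_right.trans htb))
    exact (hb₀s.trans subset_span).trans (SetLike.coe_subset_coe.2 hst)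
  lift b to Finset V using hb.finite
  lift b₀ to Finset V using (b.finite_toSet.subset hb₀b)
  rw [← hb₀span, finrank_span_finset_eq_card hb₀] at hsm
  rw [← hbspan, finrank_span_finset_eq_card hb] at hmt
  rw [← hb₀span, ← hbspan]
  obtain ⟨u, hb₀u, hub, rfl⟩ := Finset.exists_subsuperset_card_eq (mod_cast hb₀b) hsm hmt
  refine ⟨u, ?_, span_mono (mod_cast hb₀u), span_mono (mod_cast hub),
    finrank_span_finset_eq_card (hb.mono (mod_cast hub))⟩
  exact fun v hv ↦ (hbR (mod_cast hub hv)).elim (fun hv ↦ hs (hb₀s hv)) (@ht v)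

theorem finrank_inf_add_finrank_le_of_le (A : Submodule K V) {B C : Submodule K V} (hCB : C ≤ B) :
    finrank K ↥(A ⊓ B) + finrank K C ≤ finrank K ↥(A ⊓ C) + finrank K B := by
  have hsup : finrank K ↥(A ⊓ B ⊔ C) ≤ finrank K B := finrank_mono (sup_le inf_le_right hCB)
  have hinf : A ⊓ B ⊓ C = A ⊓ C := by rw [inf_assoc, inf_eq_right.mpr hCB]
  have := finrank_sup_add_finrank_inf_eq (A ⊓ B) C
  rw [hinf] at this
  omega

end SpanBetween

section Rational

variable {n : ℕ}

def rationalVectors (n : ℕ) : Set (EuclideanSpace ℝ (Fin n)) :=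
  {v | ∀ i, ∃ q : ℚ, v i = q}

theorem isRationalSubspace_iff {B : Submodule ℝ (EuclideanSpace ℝ (Fin n))} :
    IsRationalSubspace B ↔ ∃ s ⊆ rationalVectors n, span ℝ s = B :=
  Iff.rfl

theorem isRationalSubspace_bot : IsRationalSubspace (⊥ : Submodule ℝ (EuclideanSpace ℝ (Fin n))) :=
  isRationalSubspace_iff.2 ⟨∅, Set.empty_subset _, span_empty⟩

theorem isRationalSubspace_top : IsRationalSubspace (⊤ : Submodule ℝ (EuclideanSpace ℝ (Fin n))) := by
  let b := (EuclideanSpace.basisFun (Fin n) ℝ).toBasis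
  refine isRationalSubspace_iff.2 ⟨Set.range b, ?_, b.span_eq⟩
  rintro _ ⟨i, rfl⟩ k
  refine ⟨if i = k then 1 else 0, ?_⟩
  split_ifs <;> simp [b, *]

theorem IsRationalSubspace.exists_between {B C : Submodule ℝ (EuclideanSpace ℝ (Fin n))}
    (hB : IsRationalSubspace B) (hC : IsRationalSubspace C) (hBC : B ≤ C) {m : ℕ}
    (hBm : finrank ℝ B ≤ m) (hmC : m ≤ finrank ℝ C) :
    ∃ D, IsRationalSubspace D ∧ B ≤ D ∧ D ≤ C ∧ finrank ℝ D = m := by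
  obtain ⟨s, hs, rfl⟩ := isRationalSubspace_iff.1 hB
  obtain ⟨t, ht, rfl⟩ := isRationalSubspace_iff.1 hC
  obtain ⟨u, hu, hsu, hut, hum⟩ := exists_subset_span_between hs ht hBC hBm hmC
  exact ⟨span ℝ u, isRationalSubspace_iff.2 ⟨u, hu, rfl⟩, hsu, hut, hum⟩

end Rational

namespace IsIrrational

variable {n : ℕ} {A : Submodule ℝ (EuclideanSpace ℝ (Fin n))} {e e' j : ℕ}

theorem of_le (h : IsIrrational A e j) (hAe : finrank ℝ A + e ≤ n) (he' : e' ≤ e) :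
    IsIrrational A e' j := by
  intro B hB hBe'
  have hen : e ≤ finrank ℝ (⊤ : Submodule ℝ (EuclideanSpace ℝ (Fin n))) := by
    rw [finrank_top, finrank_euclideanSpace_fin]; omega
  obtain ⟨C, hC, hBC, -, hCe⟩ :=
    hB.exists_between isRationalSubspace_top le_top (hBe' ▸ he') hen
  have hAC := h C hC hCe
  have hmono := finrank_mono (inf_le_inf_left A hBC)
  omega

theorem of_ge (h : IsIrrational A e j) (hAe : n ≤ finrank ℝ A + e) (he' : e ≤ e') :
    IsIrrational A e' j := by
  intro B hB hBe'
  obtain ⟨C, hC, -, hCB, hCe⟩ :=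
    isRationalSubspace_bot.exists_between hB bot_le (by simp) (hBe' ▸ he')
  have hAC := h C hC hCe
  have hdim := finrank_inf_add_finrank_le_of_le A hCB
  omega

end IsIrrational

theorem irrational_of_irrational_codim_general (n : ℕ)
    (A : Submodule ℝ (EuclideanSpace ℝ (Fin n))) (d j : ℕ)
    (hA : Module.finrank ℝ A = d)
    (h : IsIrrational A (n - d) j) :
    ∀ e : ℕ, j ≤ e → e ≤ n - j → IsIrrational A e j := by
  intro e _ _
  have hdn : d ≤ n := hA ▸ (finrank_le A).trans_eq finrank_euclideanSpace_fin
  rcases le_total e (n - d) with he | he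
  · exact h.of_le (by omega) he
  · exact h.of_ge (by omega) he

/-- If a subspace `A` of `ℝ^n` of dimension `d ∈ [1, n-1]` is `(n-d, j)`-irrational, with
`j ∈ [1, min d (n-d)]`, then `A` is `(e, j)`-irrational for every `e ∈ [j, n-j]`. -/
theorem irrational_of_irrational_codim (n : ℕ) (hn : 2 ≤ n)
    (A : Submodule ℝ (EuclideanSpace ℝ (Fin n))) (d j : ℕ)
    (hA : Module.finrank ℝ A = d) (hd1 : 1 ≤ d) (hd2 : d ≤ n - 1)
    (hj1 : 1 ≤ j) (hj2 : j ≤ min d (n - d))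
    (h : IsIrrational A (n - d) j) :
    ∀ e : ℕ, j ≤ e → e ≤ n - j → IsIrrational A e j :=
  irrational_of_irrational_codim_general n A d j hA h
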